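/- For γ ≥ 1, the function f̃_d(τ) := τ²(τ² - 1)(h'(τ))² - 2h(τ) satisfies f̃_d(1) = 0 and f̃_d'(τ) = 2h'(τ)((γ-1)τ(τ²-1)h'(τ) + τ^(γ+1) - 1) > 0 for τ > 1; consequently f̃_d(τ) > 0 for all τ > 1. -/

import Mathlib

/-!
With `A = τ^(γ-2)` one has `A' = (γ-2)A/τ` and `τ³A = τ^(γ+1)`, which turns the derivative
of `f̃_d` into `2A((γ-1)τ(τ²-1)A + τ^(γ+1) - 1)`. For `γ ≥ 1` and `τ > 1` both summands in the
bracket are nonnegative and `τ^(γ+1) > 1`, so `f̃_d` is strictly increasing on `[1, ∞)` and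
positive after its zero at `τ = 1`.
-/

/-- Polytropic enthalpy: `h(τ) = (τ^(γ-1) - 1)/(γ-1)` for `γ > 1`, `log τ` for `γ = 1`. -/
noncomputable def enthalpy (γ τ : ℝ) : ℝ :=
  if γ = 1 then Real.log τ else (τ ^ (γ - 1) - 1) / (γ - 1)

/-- `f̃_d(τ) = τ²(τ²-1)(h'(τ))² - 2h(τ)` with `h'(τ) = τ^(γ-2)`. -/
noncomputable def ftildeD (γ τ : ℝ) : ℝ :=
  τ ^ 2 * (τ ^ 2 - 1) * (τ ^ (γ - 2)) ^ 2 - 2 * enthalpy γ τ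

open Real Set

lemma enthalpy_one (γ : ℝ) : enthalpy γ 1 = 0 := by
  unfold enthalpy
  split_ifs <;> simp

lemma ftildeD_one (γ : ℝ) : ftildeD γ 1 = 0 := by
  simp [ftildeD, enthalpy_one]

lemma hasDerivAt_enthalpy (γ : ℝ) {x : ℝ} (hx : 0 < x) :
    HasDerivAt (enthalpy γ) (x ^ (γ - 2)) x := by
  by_cases hγ : γ = 1
  · have hlog : enthalpy γ = log := funext fun t => if_pos hγ
    rw [hlog, hγ]
    exact (hasDerivAt_log hx.ne').congr_deriv (by norm_num [rpow_neg_one])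
  · have hpow : enthalpy γ = fun t => (t ^ (γ - 1) - 1) / (γ - 1) := funext fun t => if_neg hγ
    have hγ' : γ - 1 ≠ 0 := sub_ne_zero.mpr hγ
    rw [hpow]
    refine (((hasDerivAt_rpow_const (Or.inl hx.ne')).sub_const 1).div_const (γ - 1)).congr_deriv ?_
    rw [show γ - 1 - 1 = γ - 2 by ring]
    field_simp

lemma hasDerivAt_ftildeD (γ : ℝ) {x : ℝ} (hx : 0 < x) :
    HasDerivAt (ftildeD γ)
      (2 * x ^ (γ - 2) * ((γ - 1) * x * (x ^ 2 - 1) * x ^ (γ - 2) + x ^ (γ + 1) - 1)) x := by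
  have hA : HasDerivAt (fun t : ℝ => t ^ (γ - 2)) ((γ - 2) * x ^ (γ - 2) / x) x := by
    simpa only [rpow_sub_one hx.ne', mul_div_assoc] using
      hasDerivAt_rpow_const (p := γ - 2) (Or.inl hx.ne')
  have hsq : HasDerivAt (fun t : ℝ => t ^ 2) (2 * x) x := by
    simpa using hasDerivAt_pow 2 x
  refine (((hsq.mul (hsq.sub_const 1)).mul (hA.pow 2)).sub
    ((hasDerivAt_enthalpy γ hx).const_mul 2)).congr_deriv ?_
  simp only [Pi.mul_apply, Pi.pow_apply]
  rw [show γ + 1 = γ - 2 + (3 : ℕ) by push_cast; ring, rpow_add_natCast hx.ne']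
  field_simp
  ring

lemma ftildeD_deriv_pos {γ τ : ℝ} (hγ : 1 ≤ γ) (hτ : 1 < τ) :
    0 < 2 * τ ^ (γ - 2) * ((γ - 1) * τ * (τ ^ 2 - 1) * τ ^ (γ - 2) + τ ^ (γ + 1) - 1) := by
  have hτ0 : 0 < τ := one_pos.trans hτ
  have hsq : 0 ≤ τ ^ 2 - 1 := by nlinarith
  have hγ1 : 0 ≤ γ - 1 := sub_nonneg.mpr hγ
  have hfirst : 0 ≤ (γ - 1) * τ * (τ ^ 2 - 1) * τ ^ (γ - 2) := by positivity
  have hsecond : 1 < τ ^ (γ + 1) := one_lt_rpow hτ (by linarith)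
  have hbracket : 0 < (γ - 1) * τ * (τ ^ 2 - 1) * τ ^ (γ - 2) + τ ^ (γ + 1) - 1 := by linarith
  positivity

lemma strictMonoOn_ftildeD {γ : ℝ} (hγ : 1 ≤ γ) : StrictMonoOn (ftildeD γ) (Ici 1) := by
  have hderiv : ∀ x ∈ Ici (1 : ℝ), HasDerivAt (ftildeD γ)
      (2 * x ^ (γ - 2) * ((γ - 1) * x * (x ^ 2 - 1) * x ^ (γ - 2) + x ^ (γ + 1) - 1)) x :=
    fun x hx => hasDerivAt_ftildeD γ (one_pos.trans_le hx)
  refine strictMonoOn_of_hasDerivWithinAt_pos (convex_Ici 1)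
    (fun x hx => (hderiv x hx).continuousAt.continuousWithinAt)
    (fun x hx => (hderiv x (interior_subset hx)).hasDerivWithinAt) fun x hx => ?_
  rw [interior_Ici] at hx
  exact ftildeD_deriv_pos hγ hx

/-- For `γ ≥ 1`: `f̃_d(1) = 0`,
`f̃_d'(τ) = 2h'(τ)((γ-1)τ(τ²-1)h'(τ) + τ^(γ+1) - 1) > 0` for `τ > 1`,
and consequently `f̃_d(τ) > 0` for all `τ > 1`. -/
theorem ftildeD_props (γ : ℝ) (hγ : 1 ≤ γ) :
    ftildeD γ 1 = 0 ∧
    (∀ τ : ℝ, 1 < τ →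
      HasDerivAt (ftildeD γ)
        (2 * τ ^ (γ - 2) * ((γ - 1) * τ * (τ ^ 2 - 1) * τ ^ (γ - 2) + τ ^ (γ + 1) - 1)) τ ∧
      0 < 2 * τ ^ (γ - 2) * ((γ - 1) * τ * (τ ^ 2 - 1) * τ ^ (γ - 2) + τ ^ (γ + 1) - 1)) ∧
    (∀ τ : ℝ, 1 < τ → 0 < ftildeD γ τ) := by
  refine ⟨ftildeD_one γ,
    fun τ hτ => ⟨hasDerivAt_ftildeD γ (one_pos.trans hτ), ftildeD_deriv_pos hγ hτ⟩,
    fun τ hτ => ?_⟩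
  simpa [ftildeD_one] using strictMonoOn_ftildeD hγ self_mem_Ici hτ.le hτ
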